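/- For each of the types R_N ∈ {C_N, C_N^∨, BC_N}, for all j, k ∈ {1,…,N} and every y ∈ ℝ, ∫₀^L conj(M_j(x+iy)) M_k(x+iy) dx = δ_{jk} · L { e^{4πJ(j)y/L} θ₂(2(J(j)τ − i𝒩y/L); 2𝒩τ) + e^{−4πJ(j)y/L} θ₂(2(J(j)τ + i𝒩y/L); 2𝒩τ) }. -/

import Mathlib

/-!
On the line `Im z = y`, each of the two theta series in `M_j` is an absolutely convergent series
of characters `x ↦ e^{2πiλx/L}`, the frequencies running over `±(J(j) + 𝒩(ℤ - 1/2))`. All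
frequencies of `M_j` and `M_k` differ by integers, so integrating `conj(M_j) M_k` over a period
keeps exactly the pairs of equal frequencies. Because `0 < J(j), J(k)` and `J(j) + J(k) < 𝒩`,
such pairs exist only for `j = k`, and then only on the diagonal. Since `τ` is purely imaginary
the coefficients are real, and their squares are the terms of `θ₂` with doubled arguments.
-/

open Complex MeasureTheory
open scoped Real ComplexConjugate

noncomputable section

/-- The Jacobi theta function θ₀. -/
def jtheta0 (v τ : ℂ) : ℂ :=
  ∑' n : ℤ, (-1 : ℂ) ^ n * Complex.exp (π * I * τ * (n : ℂ) ^ 2) *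
    Complex.exp (2 * π * I * (n : ℂ) * v)

/-- The Jacobi theta function θ₁. -/
def jtheta1 (v τ : ℂ) : ℂ :=
  I * ∑' n : ℤ, (-1 : ℂ) ^ n * Complex.exp (π * I * τ * ((n : ℂ) - 1 / 2) ^ 2) *
    Complex.exp ((2 * (n : ℂ) - 1) * π * I * v)

/-- The Jacobi theta function θ₂. -/
def jtheta2 (v τ : ℂ) : ℂ :=
  ∑' n : ℤ, Complex.exp (π * I * τ * ((n : ℂ) - 1 / 2) ^ 2) *
    Complex.exp ((2 * (n : ℂ) - 1) * π * I * v)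

/-- The Jacobi theta function θ₃. -/
def jtheta3 (v τ : ℂ) : ℂ :=
  ∑' n : ℤ, Complex.exp (π * I * τ * (n : ℂ) ^ 2) * Complex.exp (2 * π * I * (n : ℂ) * v)

/-- Dedekind's eta function. -/
def dedekindEta (τ : ℂ) : ℂ :=
  Complex.exp (π * I * τ / 12) * ∏' n : ℕ, (1 - Complex.exp (2 * π * I * ((n : ℂ) + 1) * τ))

/-- For types C_N, C_N^∨, BC_N:
M_j(z) = e^{2πiJz/L} θ₂(Jτ + 𝒩z/L; 𝒩τ) − e^{−2πiJz/L} θ₂(Jτ − 𝒩z/L; 𝒩τ), τ = iW/L. -/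
def MC (nn : ℕ) (L W : ℝ) (Jj : ℝ) (z : ℂ) : ℂ :=
  Complex.exp (2 * π * I * Jj * z / L) *
      jtheta2 ((Jj : ℂ) * (I * W / L) + nn * z / L) (nn * (I * W / L)) -
    Complex.exp (-(2 * π * I * Jj * z / L)) *
      jtheta2 ((Jj : ℂ) * (I * W / L) - nn * z / L) (nn * (I * W / L))

/-- The right-hand side L { e^{4πJy/L} θ₂(2(Jτ − i𝒩y/L); 2𝒩τ) + e^{−4πJy/L} θ₂(2(Jτ + i𝒩y/L); 2𝒩τ) }. -/
def mRHS (nn : ℕ) (L W : ℝ) (Jj y : ℝ) : ℂ :=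
  (L : ℂ) *
    (Complex.exp (4 * π * Jj * y / L) *
        jtheta2 (2 * ((Jj : ℂ) * (I * W / L) - I * nn * y / L)) (2 * nn * (I * W / L)) +
      Complex.exp (-(4 * π * Jj * y / L)) *
        jtheta2 (2 * ((Jj : ℂ) * (I * W / L) + I * nn * y / L)) (2 * nn * (I * W / L)))

theorem norm_exp_two_pi_I_mul_div (t x L : ℝ) : ‖cexp (2 * π * I * t * x / L)‖ = 1 := by
  rw [show (2 * π * I * t * x / L : ℂ) = ↑(2 * π * t * x / L) * I by push_cast; ring]
  exact norm_exp_ofReal_mul_I _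

theorem conj_exp_two_pi_I_mul_div (t x L : ℝ) :
    conj (cexp (2 * π * I * t * x / L)) = cexp (2 * π * I * ↑(-t) * x / L) := by
  rw [← exp_conj]
  simp only [map_mul, map_div₀, conj_ofReal, conj_I, map_ofNat]
  push_cast
  ring_nf

theorem Summable.mul_exp_two_pi_I_mul_div {ι : Type*} {c : ι → ℂ} (hc : Summable c) (t : ι → ℝ)
    (x L : ℝ) : Summable fun i ↦ c i * cexp (2 * π * I * t i * x / L) :=
  .of_norm (by simpa only [norm_mul, norm_exp_two_pi_I_mul_div, mul_one] using
    summable_norm_iff.mpr hc)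

theorem integral_exp_two_pi_I_int_mul_div {L : ℝ} (hL : L ≠ 0) (n : ℤ) :
    ∫ x in (0 : ℝ)..L, cexp (2 * π * I * n * x / L) = if n = 0 then (L : ℂ) else 0 := by
  split_ifs with hn
  · simp [hn]
  · have hL' : (L : ℂ) ≠ 0 := ofReal_ne_zero.mpr hL
    have hc : (2 * π * I * n / L : ℂ) ≠ 0 := by simp [hn, hL, Real.pi_ne_zero, I_ne_zero]
    have hlin (x : ℝ) : (2 * π * I * n * x / L : ℂ) = 2 * π * I * n / L * x := by ring
    simp_rw [hlin]
    rw [integral_exp_mul_complex hc,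
      show 2 * π * I * n / L * L = n * (2 * π * I) by field_simp, exp_int_mul_two_pi_mul_I]
    simp

theorem hasSum_intervalIntegral_tsum_exp {ι : Type*} [Countable ι] {L : ℝ} (hL : L ≠ 0)
    {a : ι → ℂ} (ha : Summable a) {t : ι → ℝ} (ht : ∀ i, ∃ n : ℤ, t i = n) :
    HasSum (fun i ↦ if t i = 0 then L * a i else 0)
      (∫ x in (0 : ℝ)..L, ∑' i, a i * cexp (2 * π * I * t i * x / L)) := by
  have hF : HasSum (fun i ↦ ∫ x in (0 : ℝ)..L, a i * cexp (2 * π * I * t i * x / L))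
      (∫ x in (0 : ℝ)..L, ∑' i, a i * cexp (2 * π * I * t i * x / L)) := by
    refine intervalIntegral.hasSum_integral_of_dominated_convergence (fun i _ ↦ ‖a i‖)
      (fun i ↦ by fun_prop) (fun i ↦ ?_) (ae_of_all _ fun _ _ ↦ (summable_norm_iff.mpr ha))
      intervalIntegrable_const (ae_of_all _ fun x _ ↦ ?_)
    · exact ae_of_all _ fun x _ ↦ by rw [norm_mul, norm_exp_two_pi_I_mul_div, mul_one]
    · exact (ha.mul_exp_two_pi_I_mul_div t x L).hasSum
  convert hF using 2 with i
  obtain ⟨n, hn⟩ := ht i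
  rw [intervalIntegral.integral_const_mul, hn, ofReal_intCast,
    integral_exp_two_pi_I_int_mul_div hL]
  simp only [Int.cast_eq_zero]
  split_ifs <;> ring

theorem conj_tsum_mul_tsum_exp {ι κ : Type*} {c : ι → ℂ} {d : κ → ℂ}
    (hc : Summable c) (hd : Summable d) (μ : ι → ℝ) (ν : κ → ℝ) (L x : ℝ) :
    conj (∑' i, c i * cexp (2 * π * I * μ i * x / L)) * ∑' k, d k * cexp (2 * π * I * ν k * x / L)
      = ∑' p : ι × κ, conj (c p.1) * d p.2 * cexp (2 * π * I * ↑(ν p.2 - μ p.1) * x / L) := by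
  simp only [conj_tsum, map_mul, conj_exp_two_pi_I_mul_div]
  rw [tsum_mul_tsum_of_summable_norm]
  · refine tsum_congr fun p ↦ ?_
    rw [mul_mul_mul_comm, ← exp_add]
    congr 2
    push_cast
    ring
  · simpa only [norm_mul, RCLike.norm_conj, norm_exp_two_pi_I_mul_div, mul_one]
      using summable_norm_iff.mpr hc
  · simpa only [norm_mul, norm_exp_two_pi_I_mul_div, mul_one] using summable_norm_iff.mpr hd

theorem intervalIntegral_conj_tsum_mul_tsum_exp {ι κ : Type*} [Countable ι] [Countable κ]
    {L : ℝ} (hL : L ≠ 0) {c : ι → ℂ} {d : κ → ℂ} (hc : Summable c) (hd : Summable d)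
    {μ : ι → ℝ} {ν : κ → ℝ} (hμν : ∀ i k, ∃ n : ℤ, ν k - μ i = n) :
    ∫ x in (0 : ℝ)..L,
        conj (∑' i, c i * cexp (2 * π * I * μ i * x / L)) *
          ∑' k, d k * cexp (2 * π * I * ν k * x / L)
      = L * ∑' p : ι × κ, if μ p.1 = ν p.2 then conj (c p.1) * d p.2 else 0 := by
  have hcd : Summable fun p : ι × κ ↦ conj (c p.1) * d p.2 :=
    (summable_mul_of_summable_norm (f := conj ∘ c) (by simpa using summable_norm_iff.mpr hc)
      (summable_norm_iff.mpr hd))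
  simp_rw [conj_tsum_mul_tsum_exp hc hd]
  rw [← (hasSum_intervalIntegral_tsum_exp hL hcd fun p ↦ hμν p.1 p.2).tsum_eq, ← tsum_mul_left]
  refine tsum_congr fun p ↦ ?_
  simp only [sub_eq_zero, eq_comm (a := ν p.2)]
  split_ifs <;> ring

theorem tsum_prod_ite_eq_tsum_diag {ι α M : Type*} [DecidableEq α] [AddCommMonoid M]
    [TopologicalSpace M] {μ ν : ι → α} (h : ∀ i k, μ i = ν k ↔ i = k) (g : ι × ι → M) :
    ∑' p : ι × ι, (if μ p.1 = ν p.2 then g p else 0) = ∑' i, g (i, i) := by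
  have hdiag : Function.Injective fun i : ι ↦ (i, i) := fun i k hik ↦ congrArg Prod.fst hik
  rw [← hdiag.tsum_eq]
  · simp [h]
  · rintro ⟨i, k⟩ hik
    obtain rfl : i = k := (h i k).mp (by by_contra hne; simp [hne] at hik)
    exact ⟨i, rfl⟩

theorem Int.eq_zero_of_abs_mul_lt {z : ℤ} {r : ℝ} (h : |z * r| < r) : z = 0 := by
  by_contra hz
  have h1 : (1 : ℝ) ≤ |(z : ℝ)| := by exact_mod_cast Int.one_le_abs hz
  rw [abs_mul] at h
  nlinarith [le_abs_self r, abs_nonneg r]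

def jtheta2Term (n : ℤ) (v τ : ℂ) : ℂ :=
  cexp (π * I * τ * ((n : ℂ) - 1 / 2) ^ 2) * cexp ((2 * (n : ℂ) - 1) * π * I * v)

theorem jtheta2_eq_tsum (v τ : ℂ) : jtheta2 v τ = ∑' n : ℤ, jtheta2Term n v τ := rfl

theorem jtheta2Term_eq_mul_jacobiTheta₂_term (n : ℤ) (v τ : ℂ) :
    jtheta2Term n v τ = cexp (π * I * τ / 4 - π * I * v) * jacobiTheta₂_term n (v - τ / 2) τ := by
  simp only [jtheta2Term, jacobiTheta₂_term, ← exp_add]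
  ring_nf

theorem summable_jtheta2Term (v : ℂ) {τ : ℂ} (hτ : 0 < τ.im) : Summable (jtheta2Term · v τ) := by
  simp only [jtheta2Term_eq_mul_jacobiTheta₂_term]
  exact ((summable_jacobiTheta₂_term_iff _ τ).mpr hτ).mul_left _

theorem jtheta2Term_I_mul (n : ℤ) (b c : ℝ) :
    jtheta2Term n (I * b) (I * c)
      = cexp ((-(π * c * (n - 1 / 2) ^ 2) - (2 * n - 1) * π * b : ℝ)) := by
  rw [jtheta2Term, ← exp_add]
  congr 1
  push_cast
  linear_combination (π * c * (n - 1 / 2) ^ 2 + (2 * n - 1) * π * b) * I_sq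

theorem conj_mul_self_exp_mul_jtheta2Term_I_mul (n : ℤ) (a b c : ℝ) :
    conj (cexp a * jtheta2Term n (I * b) (I * c)) * (cexp a * jtheta2Term n (I * b) (I * c))
      = cexp (2 * a) * jtheta2Term n (I * ↑(2 * b)) (I * ↑(2 * c)) := by
  simp only [jtheta2Term_I_mul, map_mul, ← exp_conj, conj_ofReal]
  simp only [← exp_add]
  congr 1
  push_cast
  ring

/-- Frequencies, in units of `1 / L`, of the characters making up `x ↦ MC nn L W J (x + I * y)`:
`inl n` comes from the first theta series of `MC`, `inr n` from the second. -/
def mcFreq (nn : ℕ) (J : ℝ) : ℤ ⊕ ℤ → ℝ :=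
  Sum.elim (fun n ↦ J + nn * (n - 1 / 2)) (fun n ↦ -(J + nn * (n - 1 / 2)))

def mcCoeff (nn : ℕ) (L W J y : ℝ) : ℤ ⊕ ℤ → ℂ :=
  Sum.elim
    (fun n ↦ cexp ↑(-(2 * π * J * y / L)) *
      jtheta2Term n (I * ↑((J * W + nn * y) / L)) (I * ↑(nn * W / L)))
    (fun n ↦ -(cexp ↑(2 * π * J * y / L) *
      jtheta2Term n (I * ↑((J * W - nn * y) / L)) (I * ↑(nn * W / L))))

section mcCoeff

variable {nn : ℕ} {L W : ℝ}

theorem summable_mcCoeff (hL : 0 < L) (hW : 0 < W) (hnn : 0 < nn) (J y : ℝ) :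
    Summable (mcCoeff nn L W J y) := by
  have hτ : 0 < (I * ↑(nn * W / L)).im := by
    simpa using (by positivity : 0 < nn * W / L)
  exact .sum _ ((summable_jtheta2Term _ hτ).mul_left _) ((summable_jtheta2Term _ hτ).mul_left _).neg

theorem MC_eq_tsum (hL : 0 < L) (hW : 0 < W) (hnn : 0 < nn) (J y x : ℝ) :
    MC nn L W J (x + I * y)
      = ∑' p, mcCoeff nn L W J y p * cexp (2 * π * I * mcFreq nn J p * x / L) := by
  have hs := (summable_mcCoeff hL hW hnn J y).mul_exp_two_pi_I_mul_div (mcFreq nn J) x L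
  rw [Summable.tsum_sum (hs.comp_injective Sum.inl_injective)
      (hs.comp_injective Sum.inr_injective), MC, jtheta2_eq_tsum, jtheta2_eq_tsum, ← tsum_mul_left, ← tsum_mul_left, sub_eq_add_neg,
    ← tsum_neg]
  simp only [mcCoeff, mcFreq, Sum.elim_inl, Sum.elim_inr]
  congr 1 <;> refine tsum_congr fun n ↦ ?_ <;>
    simp only [jtheta2Term, neg_mul, neg_inj, ← exp_add] <;> congr 1 <;>
    push_cast <;> ring_nf <;> simp only [I_sq] <;> ring

theorem mRHS_eq_tsum (hL : 0 < L) (hW : 0 < W) (hnn : 0 < nn) (J y : ℝ) :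
    mRHS nn L W J y = L * ∑' p, conj (mcCoeff nn L W J y p) * mcCoeff nn L W J y p := by
  have hτ : 0 < (I * ↑(2 * (nn * W / L))).im := by
    simpa using (by positivity : 0 < 2 * (nn * W / L))
  have hs (r a : ℝ) :
      Summable fun n ↦ cexp (2 * a) * jtheta2Term n (I * ↑(2 * r)) (I * ↑(2 * (nn * W / L))) :=
    (summable_jtheta2Term _ hτ).mul_left _
  have hinl (n : ℤ) : conj (mcCoeff nn L W J y (.inl n)) * mcCoeff nn L W J y (.inl n)
      = cexp (2 * ↑(-(2 * π * J * y / L))) *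
          jtheta2Term n (I * ↑(2 * ((J * W + nn * y) / L))) (I * ↑(2 * (nn * W / L))) :=
    conj_mul_self_exp_mul_jtheta2Term_I_mul ..
  have hinr (n : ℤ) : conj (mcCoeff nn L W J y (.inr n)) * mcCoeff nn L W J y (.inr n)
      = cexp (2 * ↑(2 * π * J * y / L)) *
          jtheta2Term n (I * ↑(2 * ((J * W - nn * y) / L))) (I * ↑(2 * (nn * W / L))) := by
    rw [mcCoeff, Sum.elim_inr, map_neg, neg_mul_neg, conj_mul_self_exp_mul_jtheta2Term_I_mul]
  rw [Summable.tsum_sum ((hs _ _).congr fun n ↦ (hinl n).symm)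
    ((hs _ _).congr fun n ↦ (hinr n).symm)]
  simp only [hinl, hinr]
  rw [mRHS, jtheta2_eq_tsum, jtheta2_eq_tsum, ← tsum_mul_left, ← tsum_mul_left, add_comm]
  congr 2 <;> refine tsum_congr fun n ↦ ?_ <;> congr 2 <;> push_cast <;> ring

end mcCoeff

section mcFreq

variable {nn : ℕ} {J K : ℝ}

theorem mcFreq_sub_mcFreq_eq_int (hsub : ∃ a : ℤ, J - K = a) (hadd : ∃ b : ℤ, J + K = b)
    (p q : ℤ ⊕ ℤ) : ∃ z : ℤ, mcFreq nn K q - mcFreq nn J p = z := by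
  obtain ⟨a, ha⟩ := hsub
  obtain ⟨b, hb⟩ := hadd
  rcases p with n | n <;> rcases q with m | m <;> simp only [mcFreq, Sum.elim_inl, Sum.elim_inr]
  · exact ⟨-a + nn * (m - n), by push_cast; linear_combination -ha⟩
  · exact ⟨-b - nn * (n + m - 1), by push_cast; linear_combination -hb⟩
  · exact ⟨b + nn * (n + m - 1), by push_cast; linear_combination hb⟩
  · exact ⟨a + nn * (n - m), by push_cast; linear_combination ha⟩

theorem mcFreq_eq_mcFreq_iff (hJ : 0 < J) (hK : 0 < K) (hJK : J + K < nn) (p q : ℤ ⊕ ℤ) :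
    mcFreq nn J p = mcFreq nn K q ↔ J = K ∧ p = q := by
  have small (s : ℝ) (z : ℤ) (hs : |s| < nn) (h : s = z * nn) : z = 0 :=
    Int.eq_zero_of_abs_mul_lt (h ▸ hs)
  have hdiff : |J - K| < nn := abs_sub_lt_iff.mpr ⟨by linarith, by linarith⟩
  have hsum : |J + K| < nn := abs_lt.mpr ⟨by linarith, hJK⟩
  rcases p with n | n <;> rcases q with m | m <;>
    simp only [mcFreq, Sum.elim_inl, Sum.elim_inr, Sum.inl.injEq, Sum.inr.injEq, reduceCtorEq,
      and_false, iff_false]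
  · refine ⟨fun h ↦ ?_, by rintro ⟨rfl, rfl⟩; rfl⟩
    obtain rfl : n = m := by
      have := small (J - K) (m - n) hdiff (by push_cast; linear_combination h)
      omega
    exact ⟨by linarith, rfl⟩
  · intro h
    have hz : ((1 - n - m : ℤ) : ℝ) = 0 := by
      exact_mod_cast small (J + K) (1 - n - m) hsum (by push_cast; linear_combination h)
    push_cast at hz
    linarith [show J + K = 0 by linear_combination h + (nn : ℝ) * hz]
  · intro h
    have hz : ((1 - n - m : ℤ) : ℝ) = 0 := by
      exact_mod_cast small (J + K) (1 - n - m) hsum (by push_cast; linear_combination -h)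
    push_cast at hz
    linarith [show J + K = 0 by linear_combination -h + (nn : ℝ) * hz]
  · refine ⟨fun h ↦ ?_, by rintro ⟨rfl, rfl⟩; rfl⟩
    obtain rfl : n = m := by
      have := small (J - K) (m - n) hdiff (by push_cast; linear_combination -h)
      omega
    exact ⟨by linarith, rfl⟩

end mcFreq

theorem intervalIntegral_conj_MC_mul_MC {nn : ℕ} {L W J K : ℝ} (hL : 0 < L) (hW : 0 < W)
    (hJ : 0 < J) (hK : 0 < K) (hJK : J + K < nn) (hsub : ∃ a : ℤ, J - K = a)
    (hadd : ∃ b : ℤ, J + K = b) (y : ℝ) :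
    ∫ x in (0 : ℝ)..L, conj (MC nn L W J (x + I * y)) * MC nn L W K (x + I * y)
      = if J = K then mRHS nn L W J y else 0 := by
  have hnn : 0 < nn := by exact_mod_cast hJ.trans (by linarith : J < nn)
  simp_rw [MC_eq_tsum hL hW hnn]
  rw [intervalIntegral_conj_tsum_mul_tsum_exp hL.ne' (summable_mcCoeff hL hW hnn J y)
    (summable_mcCoeff hL hW hnn K y) (mcFreq_sub_mcFreq_eq_int hsub hadd)]
  split_ifs with hJK_eq
  · subst hJK_eq
    rw [tsum_prod_ite_eq_tsum_diag fun p q ↦ (mcFreq_eq_mcFreq_iff hJ hK hJK p q).trans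
      (and_iff_right rfl), mRHS_eq_tsum hL hW hnn]
  · simp [mcFreq_eq_mcFreq_iff hJ hK hJK, hJK_eq]

theorem statement3_general (N : ℕ) (L W : ℝ) (hL : 0 < L) (hW : 0 < W)
    (j k : Fin N) (y : ℝ) :
    -- type C_N : 𝒩 = 2(N+1), J(j) = j
    ((∫ x in (0:ℝ)..L,
        conj (MC (2 * (N + 1)) L W ((j : ℕ) + 1) (x + I * y)) *
          MC (2 * (N + 1)) L W ((k : ℕ) + 1) (x + I * y))
      = if j = k then mRHS (2 * (N + 1)) L W ((j : ℕ) + 1) y else 0) ∧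
    -- type C_N^∨ : 𝒩 = 2N, J(j) = j − 1/2
    ((∫ x in (0:ℝ)..L,
        conj (MC (2 * N) L W ((j : ℕ) + 1 / 2) (x + I * y)) *
          MC (2 * N) L W ((k : ℕ) + 1 / 2) (x + I * y))
      = if j = k then mRHS (2 * N) L W ((j : ℕ) + 1 / 2) y else 0) ∧
    -- type BC_N : 𝒩 = 2N+1, J(j) = j
    ((∫ x in (0:ℝ)..L,
        conj (MC (2 * N + 1) L W ((j : ℕ) + 1) (x + I * y)) *
          MC (2 * N + 1) L W ((k : ℕ) + 1) (x + I * y))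
      = if j = k then mRHS (2 * N + 1) L W ((j : ℕ) + 1) y else 0) := by
  have hj : ((j : ℕ) : ℝ) + 1 ≤ N := by exact_mod_cast j.isLt
  have hk : ((k : ℕ) : ℝ) + 1 ≤ N := by exact_mod_cast k.isLt
  have hjk (c : ℝ) : ((j : ℕ) : ℝ) + c = (k : ℕ) + c ↔ j = k := by simp [Fin.val_inj]
  refine ⟨?_, ?_, ?_⟩
  · rw [intervalIntegral_conj_MC_mul_MC hL hW (by positivity) (by positivity)
      (by push_cast; linarith) ⟨j - k, by push_cast; ring⟩ ⟨j + k + 2, by push_cast; ring⟩ y]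
    simp only [hjk]
  · rw [intervalIntegral_conj_MC_mul_MC hL hW (by positivity) (by positivity)
      (by push_cast; linarith) ⟨j - k, by push_cast; ring⟩ ⟨j + k + 1, by push_cast; ring⟩ y]
    simp only [hjk]
  · rw [intervalIntegral_conj_MC_mul_MC hL hW (by positivity) (by positivity)
      (by push_cast; linarith) ⟨j - k, by push_cast; ring⟩ ⟨j + k + 2, by push_cast; ring⟩ y]
    simp only [hjk]

theorem statement3 (N : ℕ) (hN : 1 ≤ N) (L W : ℝ) (hL : 0 < L) (hW : 0 < W)
    (j k : Fin N) (y : ℝ) :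
    -- type C_N : 𝒩 = 2(N+1), J(j) = j
    ((∫ x in (0:ℝ)..L,
        conj (MC (2 * (N + 1)) L W ((j : ℕ) + 1) (x + I * y)) *
          MC (2 * (N + 1)) L W ((k : ℕ) + 1) (x + I * y))
      = if j = k then mRHS (2 * (N + 1)) L W ((j : ℕ) + 1) y else 0) ∧
    -- type C_N^∨ : 𝒩 = 2N, J(j) = j − 1/2
    ((∫ x in (0:ℝ)..L,
        conj (MC (2 * N) L W ((j : ℕ) + 1 / 2) (x + I * y)) *
          MC (2 * N) L W ((k : ℕ) + 1 / 2) (x + I * y))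
      = if j = k then mRHS (2 * N) L W ((j : ℕ) + 1 / 2) y else 0) ∧
    -- type BC_N : 𝒩 = 2N+1, J(j) = j
    ((∫ x in (0:ℝ)..L,
        conj (MC (2 * N + 1) L W ((j : ℕ) + 1) (x + I * y)) *
          MC (2 * N + 1) L W ((k : ℕ) + 1) (x + I * y))
      = if j = k then mRHS (2 * N + 1) L W ((j : ℕ) + 1) y else 0) :=
  statement3_general N L W hL hW j k y
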